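/- arXiv:1512.08722 — 2 statements merged into one kernel-verified Lean document; each statement's English description precedes it below -/
import Mathlib

section
/- Let ψ: ℝ → ℝ be an even, continuously differentiable function such that t ↦ ψ(√t) is concave on [0, +∞) and lim_{t→0} ψ'(t)/t exists and is finite. Define ν(t) = ψ'(t)/t for t ≠ 0 (extended by continuity at 0). Then for every t, t' ∈ ℝ, ψ(t') ≤ ψ(t) + ψ'(t)(t' - t) + (1/2) ν(|t|) (t' - t)². -/
/-! Since `ψ` is even, `ψ t = φ (t ^ 2)` with `φ s = ψ (√s)` concave, and the claimed bound is the
tangent-line inequality `φ (t' ^ 2) ≤ φ (t ^ 2) + φ' (t ^ 2) (t' ^ 2 - t ^ 2)` rewritten with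
`φ' (t ^ 2) = ν |t| / 2` and `ψ' t = ν |t| t` (`ψ'` is odd). At `t = 0` the tangent line is obtained as the limit of
the tangent lines at `s → 0⁺`. -/

open Set Filter Topology

lemma Function.Even.apply_abs {β : Type*} {f : ℝ → β} (hf : f.Even) (x : ℝ) : f |x| = f x := by
  rcases abs_choice x with h | h <;> simp only [h, hf.eq]

lemma Function.Even.deriv_odd {𝕜 F : Type*} [NontriviallyNormedField 𝕜] [NormedAddCommGroup F]
    [NormedSpace 𝕜 F] {f : 𝕜 → F} (hf : f.Even) : (deriv f).Odd := fun x => by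
  have h := deriv_comp_neg f (-x)
  rwa [funext hf.eq, neg_neg] at h

lemma ConcaveOn.le_add_mul_sub_of_hasDerivAt {S : Set ℝ} {f : ℝ → ℝ} {f' x y : ℝ}
    (hf : ConcaveOn ℝ S f) (hx : x ∈ S) (hy : y ∈ S) (hf' : HasDerivAt f f' x) :
    f y ≤ f x + f' * (y - x) := by
  rcases lt_trichotomy x y with hxy | rfl | hxy
  · have := hf.slope_le_of_hasDerivAt hx hy hxy hf'
    rw [slope_def_field, div_le_iff₀ (sub_pos.2 hxy)] at this
    linarith
  · simp
  · have := hf.le_slope_of_hasDerivAt hy hx hxy hf'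
    rw [slope_def_field, le_div_iff₀ (sub_pos.2 hxy)] at this
    linarith

lemma ConcaveOn.le_add_mul_sub_of_tendsto_deriv {φ φ' : ℝ → ℝ} {a b L : ℝ}
    (hφ : ConcaveOn ℝ (Ici a) φ) (hderiv : ∀ s, a < s → HasDerivAt φ (φ' s) s)
    (hcont : ContinuousWithinAt φ (Ioi a) a) (hlim : Tendsto φ' (𝓝[>] a) (𝓝 L)) (hab : a ≤ b) :
    φ b ≤ φ a + L * (b - a) := by
  have htangent : Tendsto (fun s => φ s + φ' s * (b - s)) (𝓝[>] a) (𝓝 (φ a + L * (b - a))) :=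
    hcont.tendsto.add <| hlim.mul <|
      tendsto_const_nhds.sub (tendsto_nhdsWithin_of_tendsto_nhds tendsto_id)
  refine ge_of_tendsto htangent ?_
  filter_upwards [self_mem_nhdsWithin] with s hs
  exact hφ.le_add_mul_sub_of_hasDerivAt (mem_Ioi.1 hs).le hab (hderiv s hs)

lemma HasDerivAt.comp_sqrt_sq {f : ℝ → ℝ} {f' u : ℝ} (hf : HasDerivAt f f' u) (hu : 0 < u) :
    HasDerivAt (fun s => f (√s)) (f' / u / 2) (u ^ 2) := by
  have hsqrt := Real.hasDerivAt_sqrt (pow_pos hu 2).ne'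
  rw [Real.sqrt_sq hu.le] at hsqrt
  rw [← Real.sqrt_sq hu.le] at hf
  exact (hf.comp (u ^ 2) hsqrt).congr_deriv (by ring)

lemma Real.tendsto_sqrt_nhdsGT_zero : Tendsto Real.sqrt (𝓝[>] 0) (𝓝[≠] 0) :=
  tendsto_nhdsWithin_iff.2
    ⟨(Real.continuous_sqrt.tendsto' 0 0 Real.sqrt_zero).mono_left nhdsWithin_le_nhds,
      eventually_nhdsWithin_of_forall fun _ hs => (Real.sqrt_pos.2 hs).ne'⟩

/-- Half-quadratic majorization property (Eq. (14)). -/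
theorem halfquadratic_majorization
    (ψ ν : ℝ → ℝ)
    (heven : ∀ t : ℝ, ψ (-t) = ψ t)
    (hC1 : ContDiff ℝ 1 ψ)
    (hconc : ConcaveOn ℝ (Set.Ici (0 : ℝ)) (fun t => ψ (Real.sqrt t)))
    (hν : ∀ t : ℝ, t ≠ 0 → ν t = deriv ψ t / t)
    (hlim : Filter.Tendsto (fun t => deriv ψ t / t) (nhdsWithin 0 {(0 : ℝ)}ᶜ)
      (nhds (ν 0))) :
    ∀ t t' : ℝ,
      ψ t' ≤ ψ t + deriv ψ t * (t' - t) + (1 / 2) * ν |t| * (t' - t) ^ 2 := by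
  intro t t'
  have hψ_even : ψ.Even := heven
  have hψ_sqrt_sq (x : ℝ) : ψ √(x ^ 2) = ψ x := by rw [Real.sqrt_sq_eq_abs, hψ_even.apply_abs]
  have hφ_deriv (u : ℝ) (hu : 0 < u) :
      HasDerivAt (fun s => ψ √s) (deriv ψ u / u / 2) (u ^ 2) :=
    ((hC1.differentiable one_ne_zero u).hasDerivAt).comp_sqrt_sq hu
  have hderiv : deriv ψ t = ν |t| * t := by
    rcases eq_or_ne t 0 with rfl | ht
    · simp [hψ_even.deriv_odd.map_zero]
    rw [hν |t| (abs_ne_zero.2 ht)]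
    rcases abs_choice t with h | h
    · rw [h]; field_simp
    · rw [h, hψ_even.deriv_odd.eq]; field_simp
  have hmajor : ψ t' ≤ ψ t + ν |t| / 2 * (t' ^ 2 - t ^ 2) := by
    rcases eq_or_ne t 0 with rfl | ht
    · have h := hconc.le_add_mul_sub_of_tendsto_deriv (b := t' ^ 2)
        (φ' := fun s => deriv ψ √s / √s / 2)
        (fun s hs => by simpa only [Real.sq_sqrt hs.le] using hφ_deriv √s (Real.sqrt_pos.2 hs))
        (hC1.continuous.comp Real.continuous_sqrt).continuousWithinAt
        ((hlim.comp Real.tendsto_sqrt_nhdsGT_zero).div_const 2) (sq_nonneg t')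
      simpa [hψ_sqrt_sq] using h
    · have h := hconc.le_add_mul_sub_of_hasDerivAt (sq_nonneg |t|) (sq_nonneg t')
        (hφ_deriv |t| (abs_pos.2 ht))
      rwa [hψ_sqrt_sq, hψ_sqrt_sq, hψ_even.apply_abs, sq_abs, ← hν |t| (abs_ne_zero.2 ht)] at h
  rw [hderiv]
  linear_combination hmajor
end

section
/- Under the MM subspace scheme: if Θ(h', h) = F(h) + ∇F(h)ᵀ(h'-h) + (1/2)(h'-h)ᵀA(h'-h) with A symmetric, 0 ≺ A ⪯ α^{-1}I, the subspace ran D contains both h and ∇F(h), and h⁺ minimizes Θ(·,h) over ran D, then α ‖∇F(h)‖² ≤ (h⁺ - h)ᵀ A (h⁺ - h). -/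
/-!
Write `d = h⁺ - h`. Along the line `s ↦ h + s • d`, which lies in the subspace, the model is the
one-variable quadratic `Θ h + s (g ⬝ d) + s² / 2 (d ⬝ A d)`, minimized at `s = 1`; hence
`g ⬝ d = - d ⬝ A d` and `Θ h⁺ = Θ h - (d ⬝ A d) / 2`. The gradient step `h - α • g` also lies in the
subspace, and `A ⪯ α⁻¹ I` gives `Θ (h - α • g) ≤ Θ h - α ‖g‖² / 2`. Comparing the two values of `Θ`
yields the bound.
-/

open Matrix

lemma eq_zero_of_forall_mul_add_mul_sq_nonneg {c q : ℝ} (h : ∀ t : ℝ, 0 ≤ c * t + q * t ^ 2) :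
    c = 0 := by
  -- at `t = -c / (|q| + 1)` the linear term dominates the quadratic one
  have hq : 0 < |q| + 1 := by positivity
  have key := h (-c / (|q| + 1))
  have hsq : q * (-c / (|q| + 1)) ^ 2 ≤ |q| * (c / (|q| + 1)) ^ 2 := by
    rw [neg_div, neg_sq]
    exact mul_le_mul_of_nonneg_right (le_abs_self q) (sq_nonneg _)
  have hlin : c * (-c / (|q| + 1)) = -(|q| + 1) * (c / (|q| + 1)) ^ 2 := by
    field_simp
  have hu : (c / (|q| + 1)) ^ 2 = 0 := le_antisymm (by linarith) (sq_nonneg _)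
  simpa [hq.ne'] using hu

section QuadModel

variable {n : Type*} [Fintype n]

noncomputable def quadModel (c : ℝ) (g h : n → ℝ) (A : Matrix n n ℝ) (x : n → ℝ) : ℝ :=
  c + g ⬝ᵥ (x - h) + (1 / 2) * ((x - h) ⬝ᵥ A *ᵥ (x - h))

variable {c α : ℝ} {g h hplus : n → ℝ} {A : Matrix n n ℝ} {S : Submodule ℝ (n → ℝ)}

lemma quadModel_add_smul (v : n → ℝ) (s : ℝ) :
    quadModel c g h A (h + s • v) = c + s * (g ⬝ᵥ v) + s ^ 2 / 2 * (v ⬝ᵥ A *ᵥ v) := by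
  rw [quadModel, add_sub_cancel_left, mulVec_smul, dotProduct_smul, smul_dotProduct,
    dotProduct_smul]
  simp only [smul_eq_mul]
  ring

lemma dotProduct_add_mulVec_eq_zero_of_isMinOn (h_mem : h ∈ S) (hplus_mem : hplus ∈ S)
    (hplus_min : IsMinOn (quadModel c g h A) S hplus) :
    g ⬝ᵥ (hplus - h) + (hplus - h) ⬝ᵥ A *ᵥ (hplus - h) = 0 := by
  set d := hplus - h
  refine eq_zero_of_forall_mul_add_mul_sq_nonneg (q := (d ⬝ᵥ A *ᵥ d) / 2) fun t ↦ ?_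
  have hline : h + (1 + t) • d ∈ S := S.add_mem h_mem (S.smul_mem _ (S.sub_mem hplus_mem h_mem))
  have hmin := isMinOn_iff.mp hplus_min _ hline
  rw [← add_sub_cancel h hplus, ← one_smul ℝ (hplus - h), quadModel_add_smul,
    quadModel_add_smul] at hmin
  nlinarith

lemma quadModel_eq_sub_of_isMinOn (h_mem : h ∈ S) (hplus_mem : hplus ∈ S)
    (hplus_min : IsMinOn (quadModel c g h A) S hplus) :
    quadModel c g h A hplus = c - (hplus - h) ⬝ᵥ A *ᵥ (hplus - h) / 2 := by
  have hfoc := dotProduct_add_mulVec_eq_zero_of_isMinOn h_mem hplus_mem hplus_min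
  rw [quadModel]
  linarith

lemma quadModel_sub_smul_le (hA : ∀ v, v ⬝ᵥ A *ᵥ v ≤ α⁻¹ * (v ⬝ᵥ v)) :
    quadModel c g h A (h - α • g) ≤ c - α / 2 * (g ⬝ᵥ g) := by
  rw [sub_eq_add_neg, ← neg_smul, quadModel_add_smul]
  have hαα : (-α) ^ 2 / 2 * (α⁻¹ * (g ⬝ᵥ g)) = α / 2 * (g ⬝ᵥ g) := by
    rcases eq_or_ne α 0 with rfl | hα
    · simp
    · field_simp
  have := mul_le_mul_of_nonneg_left (hA g) (by positivity : (0 : ℝ) ≤ (-α) ^ 2 / 2)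
  linarith

theorem mul_dotProduct_self_le_of_isMinOn (hA : ∀ v, v ⬝ᵥ A *ᵥ v ≤ α⁻¹ * (v ⬝ᵥ v))
    (h_mem : h ∈ S) (g_mem : g ∈ S) (hplus_mem : hplus ∈ S)
    (hplus_min : IsMinOn (quadModel c g h A) S hplus) :
    α * (g ⬝ᵥ g) ≤ (hplus - h) ⬝ᵥ A *ᵥ (hplus - h) := by
  have hstep := isMinOn_iff.mp hplus_min _ (S.sub_mem h_mem (S.smul_mem α g_mem))
  rw [quadModel_eq_sub_of_isMinOn h_mem hplus_mem hplus_min] at hstep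
  linarith [quadModel_sub_smul_le (c := c) (g := g) (h := h) hA]

end QuadModel

theorem mm_subspace_gradient_bound_general {N M : ℕ}
    (F : (Fin N → ℝ) → ℝ) (g h hplus : Fin N → ℝ)
    (A : Matrix (Fin N) (Fin N) ℝ)
    (α : ℝ)
    (hAbound : ∀ v : Fin N → ℝ, v ⬝ᵥ A.mulVec v ≤ α⁻¹ * (v ⬝ᵥ v))
    (D : Matrix (Fin N) (Fin M) ℝ)
    (Θ : (Fin N → ℝ) → ℝ)
    (hΘ : ∀ x : Fin N → ℝ,
      Θ x = F h + g ⬝ᵥ (x - h) + (1 / 2) * ((x - h) ⬝ᵥ A.mulVec (x - h)))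
    (hh : ∃ u : Fin M → ℝ, h = D.mulVec u)
    (hg_ran : ∃ u : Fin M → ℝ, g = D.mulVec u)
    (hplus_ran : ∃ u : Fin M → ℝ, hplus = D.mulVec u)
    (hplus_min : ∀ u : Fin M → ℝ, Θ hplus ≤ Θ (D.mulVec u)) :
    α * (g ⬝ᵥ g) ≤ (hplus - h) ⬝ᵥ A.mulVec (hplus - h) := by
  obtain rfl : Θ = quadModel (F h) g h A := funext hΘ
  have mem_range : ∀ x, (∃ u, x = D *ᵥ u) → x ∈ LinearMap.range D.mulVecLin :=
    fun _ ⟨u, hu⟩ ↦ ⟨u, hu.symm⟩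
  refine mul_dotProduct_self_le_of_isMinOn (c := F h) hAbound (mem_range h hh)
    (mem_range g hg_ran) (mem_range hplus hplus_ran) (isMinOn_iff.mpr ?_)
  rintro _ ⟨u, rfl⟩
  exact hplus_min u

/-- Gradient-norm bound (80)–(81), (85) for the MM subspace step. -/
theorem mm_subspace_gradient_bound {N M : ℕ}
    (F : (Fin N → ℝ) → ℝ) (g h hplus : Fin N → ℝ)
    (A : Matrix (Fin N) (Fin N) ℝ)
    (hAsymm : A.IsSymm) (hApd : A.PosDef)
    (α : ℝ) (hα : 0 < α)
    (hAbound : ∀ v : Fin N → ℝ, v ⬝ᵥ A.mulVec v ≤ α⁻¹ * (v ⬝ᵥ v))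
    (D : Matrix (Fin N) (Fin M) ℝ)
    (Θ : (Fin N → ℝ) → ℝ)
    (hΘ : ∀ x : Fin N → ℝ,
      Θ x = F h + g ⬝ᵥ (x - h) + (1 / 2) * ((x - h) ⬝ᵥ A.mulVec (x - h)))
    (hh : ∃ u : Fin M → ℝ, h = D.mulVec u)
    (hg_ran : ∃ u : Fin M → ℝ, g = D.mulVec u)
    (hplus_ran : ∃ u : Fin M → ℝ, hplus = D.mulVec u)
    (hplus_min : ∀ u : Fin M → ℝ, Θ hplus ≤ Θ (D.mulVec u)) :
    α * (g ⬝ᵥ g) ≤ (hplus - h) ⬝ᵥ A.mulVec (hplus - h) :=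
  mm_subspace_gradient_bound_general F g h hplus A α hAbound D Θ hΘ hh hg_ran hplus_ran hplus_min
end
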